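/- There is no symmetric psd-decomposition of W_3 of size 2: if A_0, A_1 ∈ M_2(ℂ) are psd and W_{j_1 j_2 j_3} = ∑_{α,β=1}^2 (A_{j_1})_{αβ}(A_{j_2})_{αβ}(A_{j_3})_{αβ} for all j_i ∈ {0,1}, then a contradiction follows; in particular both A_0 and A_1 must have rank ≤ 1, and the vanishing of W_{000} and W_{111} forces all entries of W to vanish. -/

import Mathlib

open scoped ComplexOrder

/-- The tripartite W-state. -/
noncomputable def Wstate3 : (Fin 3 → Fin 2) → ℂ := fun j =>
  if (Finset.univ.filter (fun i => j i = 1)).card = 1 then 1 else 0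

/-!
By the Schur product theorem every `M = A_{j₁} ⊙ A_{j₂} ⊙ A_{j₃}` is psd, and `W_{j₁j₂j₃}` is
`1ᴴ M 1`; for psd `M`, `1ᴴ M 1 = 0` forces `M 1 = 0`. Write `a, b` for the `(0,0)` entries and
`q, p` for the `(0,1)` entries of `A₀, A₁`. The row sums of `A₀ ⊙ A₀ ⊙ A₀` and `A₁ ⊙ A₁ ⊙ A₁`
vanish, so `A₀` and `A₁` have constant diagonal and `q³ = -a³`, `p³ = -b³`; the first row sum of
`A₀ ⊙ A₁ ⊙ A₁` gives `a b² + q p² = 0`. Since `(q²p)(qp²) = q³p³ = a³b³`, also `q²p = -a²b`, and then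
`W₀₀₁ = 2 a²b + 2 Re (q²p) = 0`, not `1`.
-/

open Matrix

theorem RCLike.eq_of_pow_eq_pow {𝕜 : Type*} [RCLike 𝕜] {a b : 𝕜} {k : ℕ} (hk : k ≠ 0)
    (ha : 0 ≤ a) (hb : 0 ≤ b) (h : a ^ k = b ^ k) : a = b := by
  obtain ⟨x, hx, rfl⟩ := RCLike.nonneg_iff_exists_ofReal.mp ha
  obtain ⟨y, hy, rfl⟩ := RCLike.nonneg_iff_exists_ofReal.mp hb
  rw [← RCLike.ofReal_pow, ← RCLike.ofReal_pow, RCLike.ofReal_inj, pow_left_inj₀ hx hy hk] at h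
  rw [h]

theorem sq_mul_eq_neg_of_pow_three_eq_neg {R : Type*} [CommRing R] [IsDomain R] {a b q p : R}
    (hq : q ^ 3 = -a ^ 3) (hp : p ^ 3 = -b ^ 3) (h : a * b ^ 2 + q * p ^ 2 = 0) :
    q ^ 2 * p = -(a ^ 2 * b) := by
  rcases eq_or_ne a 0 with rfl | ha
  · simp [show q = 0 by simpa using hq]
  rcases eq_or_ne b 0 with rfl | hb
  · simp [show p = 0 by simpa using hp]
  refine mul_left_cancel₀ (mul_ne_zero ha (pow_ne_zero 2 hb)) ?_
  linear_combination q ^ 2 * p * h - p ^ 3 * hq + a ^ 3 * hp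

namespace Matrix

theorem PosSemidef.mulVec_one_eq_zero {n 𝕜 : Type*} [Fintype n] [RCLike 𝕜]
    {M : Matrix n n 𝕜} (hM : M.PosSemidef) (h : ∑ i, ∑ j, M i j = 0) : M *ᵥ 1 = 0 :=
  (hM.dotProduct_mulVec_zero_iff 1).mp (by simpa [dotProduct, mulVec] using h)

theorem PosSemidef.fin_two_of_hadamard_cube_mulVec_one_eq_zero {𝕜 : Type*} [RCLike 𝕜]
    {A : Matrix (Fin 2) (Fin 2) 𝕜} (hA : A.PosSemidef) (h : (A ⊙ A ⊙ A) *ᵥ 1 = 0) :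
    A 1 1 = A 0 0 ∧ A 0 1 ^ 3 = -A 0 0 ^ 3 := by
  have row (i : Fin 2) : A i 0 ^ 3 + A i 1 ^ 3 = 0 := by
    simpa [mulVec, dotProduct, Fin.sum_univ_two, ← pow_three'] using congrFun h i
  have hcube : A 1 1 ^ 3 = A 0 0 ^ 3 := by
    have row₀_star := congrArg star (row 0)
    rw [star_add, star_pow, star_pow, hA.isHermitian.apply 0 0, hA.isHermitian.apply 1 0,
      star_zero] at row₀_star
    linear_combination row 1 - row₀_star
  exact ⟨RCLike.eq_of_pow_eq_pow three_ne_zero hA.diag_nonneg hA.diag_nonneg hcube,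
    eq_neg_of_add_eq_zero_right (row 0)⟩

end Matrix

theorem no_symmetric_psd_decomposition_W3_size_two
    (A : Fin 2 → Matrix (Fin 2) (Fin 2) ℂ) (hA : ∀ j, (A j).PosSemidef)
    (hdec : ∀ j : Fin 3 → Fin 2,
      Wstate3 j = ∑ α : Fin 2, ∑ β : Fin 2, ∏ i, A (j i) α β) : False := by
  let M (j : Fin 3 → Fin 2) := A (j 0) ⊙ A (j 1) ⊙ A (j 2)
  have hW (j) : Wstate3 j = ∑ α, ∑ β, M j α β := by simp [hdec, M, Fin.prod_univ_three]
  have hrow (j) (hj : Wstate3 j = 0) : M j *ᵥ 1 = 0 :=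
    (((hA _).hadamard (hA _)).hadamard (hA _)).mulVec_one_eq_zero ((hW j).symm.trans hj)
  obtain ⟨hd₀, hq₀⟩ :=
    (hA 0).fin_two_of_hadamard_cube_mulVec_one_eq_zero (hrow ![0, 0, 0] (if_neg (by decide)))
  obtain ⟨hd₁, hq₁⟩ :=
    (hA 1).fin_two_of_hadamard_cube_mulVec_one_eq_zero (hrow ![1, 1, 1] (if_neg (by decide)))
  have h011 : A 0 0 0 * A 1 0 0 ^ 2 + A 0 0 1 * A 1 0 1 ^ 2 = 0 := by
    simpa [M, mulVec, dotProduct, Fin.sum_univ_two, sq, mul_assoc] using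
      congrFun (hrow ![0, 1, 1] (if_neg (by decide))) 0
  have hq2p := sq_mul_eq_neg_of_pow_three_eq_neg hq₀ hq₁ h011
  have hq2p_star := congrArg star hq2p
  simp only [star_mul', star_pow, star_neg, (hA 0).isHermitian.apply 0 0,
    (hA 1).isHermitian.apply 0 0] at hq2p_star
  have h001 := hW ![0, 0, 1]
  rw [show Wstate3 ![0, 0, 1] = 1 from if_pos (by decide)] at h001
  simp only [M, Fin.sum_univ_two, hadamard_apply, cons_val_zero, cons_val_one, cons_val] at h001
  rw [hd₀, hd₁, ← (hA 0).isHermitian.apply 1 0, ← (hA 1).isHermitian.apply 1 0] at h001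
  exact one_ne_zero (by linear_combination h001 + hq2p + hq2p_star : (1 : ℂ) = 0)
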